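/- In the setting of Theorem 2, suppose an optimal configuration contains an edge ab of G such that (1) either a ∈ V(G₁) or a belongs to the reservoir R(w) of some cascade vertex w, and (2) b ∈ V(G_i) for some i ∈ {2, 3, …, k}, b ≠ v_i, and b does not belong to any reservoir. Then the cascade of G_i is not the null sequence and b is the last vertex of the cascade of G_i. -/

import Mathlib

/-- A graph `G` on a finite vertex type is `k`-connected if it has more than `k`
vertices and remains connected after deleting any set of fewer than `k` vertices. -/
def KConnected {V : Type} [Fintype V] (G : SimpleGraph V) (k : ℕ) : Prop :=
  k < Fintype.card V ∧
    ∀ D : Finset V, D.card < k → (G.induce ((↑D : Set V)ᶜ)).Connected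

/-- The reservoir of `w` (inside the part with vertex set `A` and root `vi`):
the set of vertices of `A` connected to `vi` by a path in the graph induced on
`A` minus `w`.  (So `w` is not in its own reservoir, and the reservoir of `vi`
itself is empty.) -/
def reservoir {V : Type} (G : SimpleGraph V) (A : Set V) (vi w : V) : Set V :=
  {u | ∃ (hu : u ∈ A \ {w}) (hv : vi ∈ A \ {w}),
    (G.induce (A \ {w})).Reachable ⟨vi, hv⟩ ⟨u, hu⟩}

/-- A configuration: pairwise disjoint connected vertex sets `A i` with
`|A i| = m i` and `v i ∈ A i`, together with exactly one cascade `c i` in each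
part `i ≠ 0` (the cascade of part `0` is null).  A cascade in part `i` is a
sequence of distinct vertices of `A i`, all different from `v i`, in which each
vertex is not in the reservoir of the previous one. -/
structure Config {V : Type} [Fintype V] (G : SimpleGraph V) (k : ℕ) [NeZero k]
    (v : Fin k → V) (m : Fin k → ℕ) where
  A : Fin k → Set V
  c : Fin k → List V
  disj : Pairwise fun i j => Disjoint (A i) (A j)
  conn : ∀ i, (G.induce (A i)).Connected
  hcard : ∀ i, (A i).ncard = m i
  hmem : ∀ i, v i ∈ A i
  c_zero : c 0 = []
  c_nodup : ∀ i, (c i).Nodup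
  c_mem : ∀ i, ∀ w ∈ c i, w ∈ A i ∧ w ≠ v i
  c_chain : ∀ i, (c i).Chain' fun a b => b ∉ reservoir G (A i) (v i) a

variable {V : Type} [Fintype V] {G : SimpleGraph V} {k : ℕ} [NeZero k]
  {v : Fin k → V} {m : Fin k → ℕ}

/-- A cascade vertex is a vertex belonging to one of the cascades. -/
def IsCascadeVertex (cfg : Config G k v m) (w : V) : Prop :=
  ∃ i, w ∈ cfg.c i

/-- `RankLink cfg P w` says: `w` is a cascade vertex of some part `i` and there
is a cascade vertex `w'` of a different part `j` satisfying `P` such that `w`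
has a neighbor in the reservoir of `w'`. -/
def RankLink (cfg : Config G k v m) (P : V → Prop) (w : V) : Prop :=
  ∃ i j : Fin k, i ≠ j ∧ w ∈ cfg.c i ∧
    ∃ w' ∈ cfg.c j, P w' ∧ ∃ u ∈ reservoir G (cfg.A j) (v j) w', G.Adj w u

/-- `HasRank cfg r w` says the cascade vertex `w` has rank `r`: rank `1` means
`w` has a neighbor in part `0`; otherwise the rank is the least `r ≥ 2` such
that `w` has a neighbor in the reservoir of a cascade vertex of rank `r - 1`
in a different part. -/
def HasRank (cfg : Config G k v m) : ℕ → V → Prop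
  | 0 => fun _ => False
  | 1 => fun w => IsCascadeVertex cfg w ∧ ∃ u ∈ cfg.A 0, G.Adj w u
  | r + 2 => fun w =>
      IsCascadeVertex cfg w ∧ (¬ ∃ u ∈ cfg.A 0, G.Adj w u) ∧
      RankLink cfg (HasRank cfg (r + 1)) w ∧
      ∀ s, s < r → ¬ RankLink cfg (HasRank cfg (s + 1)) w

/-- A configuration is valid if every cascade vertex has a well-defined rank and
the rank is strictly increasing along each cascade. -/
def Valid (cfg : Config G k v m) : Prop :=
  (∀ w, IsCascadeVertex cfg w → ∃ r, HasRank cfg r w) ∧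
  ∀ i, (cfg.c i).Pairwise fun a b =>
    ∀ ra rb, HasRank cfg ra a → HasRank cfg rb b → ra < rb

/-- `rho cfg r` is the total number of vertices belonging to the reservoir of
some cascade vertex of rank `r`. -/
noncomputable def rho (cfg : Config G k v m) (r : ℕ) : ℕ :=
  {u | ∃ i, ∃ w ∈ cfg.c i, HasRank cfg r w ∧
    u ∈ reservoir G (cfg.A i) (v i) w}.ncard

/-- A valid configuration is `r`-optimal if, among all valid configurations, it
maximizes `rho 1`, subject to that maximizes `rho 2`, and so on up to `rho r`.
(`ROptimal cfg 0` just says the configuration is valid.) -/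
def ROptimal (cfg : Config G k v m) : ℕ → Prop
  | 0 => Valid cfg
  | r + 1 => ROptimal cfg r ∧
      ∀ cfg' : Config G k v m, ROptimal cfg' r →
        rho cfg' (r + 1) ≤ rho cfg (r + 1)

/-- A configuration is optimal if it is `r`-optimal for every `r`. -/
def Optimal (cfg : Config G k v m) : Prop := ∀ r, ROptimal cfg r

/-- `u` belongs to the reservoir of some cascade vertex. -/
def InReservoir (cfg : Config G k v m) (u : V) : Prop :=
  ∃ i, ∃ w ∈ cfg.c i, u ∈ reservoir G (cfg.A i) (v i) w

/-- A bridge: an edge of `G` with one end in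
`S = V(G) − V(G₁) − ⋯ − V(G_k)` and the other end in the reservoir of a
cascade vertex. -/
def IsBridgeEdge (cfg : Config G k v m) (a b : V) : Prop :=
  G.Adj a b ∧ (∀ i, a ∉ cfg.A i) ∧ InReservoir cfg b

/-!
If `b` were not a cascade vertex, it could be appended to the cascade of its part `i`: it has a
neighbour in `G₁` or in the reservoir of a cascade vertex of another part, which gives it a rank
`r`. Cut every cascade down to its vertices of rank below `r` (at most `r` outside part `i`) and
append `b`. Ranks below `r` do not change, and `ρ_r` grows: the reservoir of `b` contains the
reservoirs of the rank-`r` vertices of part `i` it replaces, and also the rank-`r` vertex of part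
`i` itself, or `v_i` if there is none. This contradicts optimality. So `b` is a cascade vertex, and
it is the last one: a successor `y` would satisfy `y ∉ R(b)`, hence `b ∈ R(y)`.
-/

theorem List.mem_takeWhile_iff_of_pairwise {α : Type*} {p : α → Bool} {l : List α}
    (hl : l.Pairwise fun x y => p y → p x) {x : α} : x ∈ l.takeWhile p ↔ x ∈ l ∧ p x := by
  induction l with
  | nil => simp
  | cons a l ih =>
    rw [List.pairwise_cons] at hl
    by_cases ha : p a
    · rw [List.takeWhile_cons_of_pos ha, List.mem_cons, ih hl.2, List.mem_cons]
      by_cases hx : x = a <;> simp [hx, ha]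
    · rw [List.takeWhile_cons_of_neg ha]
      simp only [List.not_mem_nil, List.mem_cons, false_iff, not_and]
      rintro (rfl | hx) hpx
      exacts [ha hpx, ha (hl.1 x hx hpx)]

theorem List.getLast_eq_of_forall_not_rel {α : Type*} {R : α → α → Prop} {l : List α} {b : α}
    (hl : l.IsChain R) (hnd : l.Nodup) (hb : b ∈ l) (h : ∀ y ∈ l, y ≠ b → ¬ R b y) :
    l.getLast (List.ne_nil_of_mem hb) = b := by
  obtain ⟨s, t, rfl⟩ := List.append_of_mem hb
  cases t with
  | nil => simp
  | cons y t =>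
    have hby : b ∉ y :: t := (List.nodup_cons.1 hnd.of_append_right).1
    exact (h y (by simp) (fun e => hby (e ▸ List.mem_cons_self))
      (List.isChain_append_cons_cons.1 hl).2.1).elim

section Reservoir

variable {V : Type} {G : SimpleGraph V}

theorem SimpleGraph.reachable_induce_iff {s : Set V} {x y : V} (hx : x ∈ s) (hy : y ∈ s) :
    (G.induce s).Reachable ⟨x, hx⟩ ⟨y, hy⟩ ↔ ∃ p : G.Walk x y, ∀ z ∈ p.support, z ∈ s := by
  constructor
  · rintro ⟨p⟩
    let f := (SimpleGraph.Embedding.induce (G := G) s).toHom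
    refine ⟨p.map f, fun z hz => ?_⟩
    have hz : z ∈ (p.map f).support := hz
    rw [SimpleGraph.Walk.support_map, List.mem_map] at hz
    obtain ⟨z, -, rfl⟩ := hz
    exact z.2
  · rintro ⟨p, hp⟩
    exact ⟨p.induce s hp⟩

variable {A : Set V} {vi w x y u : V}

theorem mem_reservoir_iff :
    u ∈ reservoir G A vi w ↔ ∃ p : G.Walk vi u, ∀ z ∈ p.support, z ∈ A ∧ z ≠ w := by
  constructor
  · rintro ⟨hu, hv, h⟩
    exact (SimpleGraph.reachable_induce_iff hv hu).1 h
  · rintro ⟨p, hp⟩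
    exact ⟨hp u p.end_mem_support, hp vi p.start_mem_support,
      (SimpleGraph.reachable_induce_iff _ _).2 ⟨p, hp⟩⟩

theorem root_mem_reservoir (hvi : vi ∈ A) (hw : vi ≠ w) : vi ∈ reservoir G A vi w :=
  mem_reservoir_iff.2 ⟨.nil, by simpa using ⟨hvi, hw⟩⟩

theorem mem_of_mem_reservoir (h : u ∈ reservoir G A vi w) : u ∈ A ∧ u ≠ w := h.1

theorem notMem_reservoir_self : w ∉ reservoir G A vi w := fun h => (mem_of_mem_reservoir h).2 rfl

theorem mem_reservoir_of_adj (hu : u ∈ reservoir G A vi w) (hadj : G.Adj u x) (hx : x ∈ A)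
    (hxw : x ≠ w) : x ∈ reservoir G A vi w := by
  obtain ⟨p, hp⟩ := mem_reservoir_iff.1 hu
  refine mem_reservoir_iff.2 ⟨p.concat hadj, fun z hz => ?_⟩
  rw [SimpleGraph.Walk.support_concat, List.mem_append, List.mem_singleton] at hz
  rcases hz with hz | rfl
  exacts [hp z hz, ⟨hx, hxw⟩]

theorem reservoir_subset_reservoir (hx : x ∈ A) (h : x ∉ reservoir G A vi w) :
    reservoir G A vi w ⊆ reservoir G A vi x := by
  classical
  intro u hu
  obtain ⟨p, hp⟩ := mem_reservoir_iff.1 hu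
  refine mem_reservoir_iff.2 ⟨p, fun z hz => ⟨(hp z hz).1, ?_⟩⟩
  rintro rfl
  exact h (mem_reservoir_iff.2 ⟨p.takeUntil z hz,
    fun y hy => hp y (p.support_takeUntil_subset_support hz hy)⟩)

theorem mem_reservoir_of_notMem_reservoir (hconn : (G.induce A).Connected) (hvi : vi ∈ A)
    (hx : x ∈ A) (hy : y ∈ A) (hxy : x ≠ y) (h : y ∉ reservoir G A vi x) :
    x ∈ reservoir G A vi y := by
  classical
  obtain ⟨q, hq⟩ := (SimpleGraph.reachable_induce_iff hvi hy).1
    (hconn.preconnected ⟨vi, hvi⟩ ⟨y, hy⟩)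
  have hpA : ∀ z ∈ q.bypass.support, z ∈ A :=
    fun z hz => hq z (q.support_bypass_subset_support hz)
  by_cases hxq : x ∈ q.bypass.support
  · refine mem_reservoir_iff.2 ⟨q.bypass.takeUntil x hxq, fun z hz =>
      ⟨hpA z (q.bypass.support_takeUntil_subset_support hxq hz), ?_⟩⟩
    rintro rfl
    exact q.bypass.endpoint_notMem_support_takeUntil q.bypass_isPath hxq hxy.symm hz
  · refine absurd (mem_reservoir_iff.2 ⟨q.bypass, fun z hz => ⟨hpA z hz, ?_⟩⟩) h
    rintro rfl
    exact hxq hz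

end Reservoir

namespace Config

variable (cfg : Config G k v m)

theorem eq_of_mem_A {u : V} {j₁ j₂ : Fin k} (h₁ : u ∈ cfg.A j₁) (h₂ : u ∈ cfg.A j₂) : j₁ = j₂ :=
  by_contra fun hne => Set.disjoint_left.mp (cfg.disj hne) h₁ h₂

theorem eq_of_mem_c {u : V} {j₁ j₂ : Fin k} (h₁ : u ∈ cfg.c j₁) (h₂ : u ∈ cfg.c j₂) : j₁ = j₂ :=
  cfg.eq_of_mem_A (cfg.c_mem j₁ u h₁).1 (cfg.c_mem j₂ u h₂).1

end Config

section Rank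

variable {cfg : Config G k v m} {i j : Fin k} {r s t : ℕ} {a b w : V}

def LinksAt (cfg : Config G k v m) (i : Fin k) (t : ℕ) (w : V) : Prop :=
  ∃ j ≠ i, ∃ w' ∈ cfg.c j, HasRank cfg t w' ∧
    ∃ u ∈ reservoir G (cfg.A j) (v j) w', G.Adj w u

/-- The rank `w` would have as a cascade vertex of part `i` (see `hasRank_iff_partRank`). -/
def PartRank (cfg : Config G k v m) (i : Fin k) : ℕ → V → Prop
  | 0 => fun _ => False
  | 1 => fun w => ∃ u ∈ cfg.A 0, G.Adj w u
  | t + 2 => fun w => (¬ ∃ u ∈ cfg.A 0, G.Adj w u) ∧ LinksAt cfg i (t + 1) w ∧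
      ∀ s < t, ¬ LinksAt cfg i (s + 1) w

theorem PartRank.ne_zero (h : PartRank cfg i r w) : r ≠ 0 := by
  rintro rfl
  exact h

theorem PartRank.unique {r₁ r₂ : ℕ} (h₁ : PartRank cfg i r₁ w) (h₂ : PartRank cfg i r₂ w) :
    r₁ = r₂ :=
  match r₁, r₂, h₁, h₂ with
  | 1, 1, _, _ => rfl
  | 1, _ + 2, h₁, h₂ => (h₂.1 h₁).elim
  | _ + 2, 1, h₁, h₂ => (h₁.1 h₂).elim
  | t₁ + 2, t₂ + 2, h₁, h₂ => by
    rcases lt_trichotomy t₁ t₂ with h | rfl | h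
    exacts [(h₂.2.2 t₁ h h₁.2.1).elim, rfl, (h₁.2.2 t₂ h h₂.2.1).elim]

theorem rankLink_iff_linksAt (hw : w ∈ cfg.c i) :
    RankLink cfg (HasRank cfg t) w ↔ LinksAt cfg i t w := by
  constructor
  · rintro ⟨i', j, hij, hw', hlink⟩
    obtain rfl := cfg.eq_of_mem_c hw' hw
    exact ⟨j, hij.symm, hlink⟩
  · rintro ⟨j, hji, hlink⟩
    exact ⟨i, j, hji.symm, hw, hlink⟩

theorem hasRank_iff_partRank (hw : w ∈ cfg.c i) : HasRank cfg r w ↔ PartRank cfg i r w :=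
  match r with
  | 0 => by simp only [HasRank, PartRank]
  | 1 => by
    simp only [HasRank, PartRank]
    exact and_iff_right ⟨i, hw⟩
  | t + 2 => by
    simp only [HasRank, PartRank, rankLink_iff_linksAt hw]
    exact and_iff_right ⟨i, hw⟩

theorem HasRank.exists_mem (h : HasRank cfg r w) : ∃ i, w ∈ cfg.c i := by
  match r with
  | 0 => simp only [HasRank] at h
  | 1 => simp only [HasRank] at h; exact h.1
  | _ + 2 => simp only [HasRank] at h; exact h.1

theorem HasRank.unique {r₁ r₂ : ℕ} (h₁ : HasRank cfg r₁ w) (h₂ : HasRank cfg r₂ w) : r₁ = r₂ := by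
  obtain ⟨i, hw⟩ := h₁.exists_mem
  exact ((hasRank_iff_partRank hw).1 h₁).unique ((hasRank_iff_partRank hw).1 h₂)

theorem exists_partRank (h : (∃ u ∈ cfg.A 0, G.Adj w u) ∨ ∃ t, LinksAt cfg i (t + 1) w) :
    ∃ r, PartRank cfg i r w := by
  classical
  by_cases hA0 : ∃ u ∈ cfg.A 0, G.Adj w u
  · exact ⟨1, hA0⟩
  · have hex := h.resolve_left hA0
    exact ⟨Nat.find hex + 2, hA0, Nat.find_spec hex, fun s hs => Nat.find_min hex hs⟩

/-- `a` cannot lie in the reservoir of a cascade vertex of part `i`, since then so would `b`. -/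
theorem exists_partRank_of_adj (hvalid : Valid cfg) (hab : G.Adj a b)
    (ha : a ∈ cfg.A 0 ∨ InReservoir cfg a) (hbA : b ∈ cfg.A i) (hbc : b ∉ cfg.c i)
    (hbres : ¬ InReservoir cfg b) : ∃ r, PartRank cfg i r b := by
  refine exists_partRank (ha.imp (fun ha => ⟨a, ha, hab.symm⟩) ?_)
  rintro ⟨j, w, hw, haw⟩
  obtain ⟨r, hr⟩ := hvalid.1 w ⟨j, hw⟩
  obtain ⟨t, rfl⟩ := Nat.exists_eq_succ_of_ne_zero ((hasRank_iff_partRank hw).1 hr).ne_zero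
  refine ⟨t, j, ?_, w, hw, hr, a, haw, hab.symm⟩
  rintro rfl
  exact hbres ⟨j, w, hw, mem_reservoir_of_adj haw hab hbA fun h => hbc (h ▸ hw)⟩

theorem linksAt_congr {cfg' : Config G k v m} (hA : cfg'.A = cfg.A)
    (h : ∀ j w, w ∈ cfg'.c j ∧ HasRank cfg' t w ↔ w ∈ cfg.c j ∧ HasRank cfg t w) :
    LinksAt cfg' i t w ↔ LinksAt cfg i t w := by
  simp only [LinksAt, hA, ← and_assoc, h]

theorem partRank_congr {cfg' : Config G k v m} (hA : cfg'.A = cfg.A)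
    (h : ∀ t < s, ∀ j w, w ∈ cfg'.c j ∧ HasRank cfg' t w ↔ w ∈ cfg.c j ∧ HasRank cfg t w) :
    PartRank cfg' i s w ↔ PartRank cfg i s w :=
  match s with
  | 0 => Iff.rfl
  | 1 => by simp only [PartRank, hA]
  | t + 2 => by
    simp only [PartRank, hA]
    rw [linksAt_congr hA (h (t + 1) (by omega))]
    refine and_congr_right fun _ => and_congr_right fun _ => forall₂_congr fun s hs => ?_
    rw [linksAt_congr hA (h (s + 1) (by omega))]

theorem Valid.eq_of_hasRank (hvalid : Valid cfg) {w₁ w₂ : V} (h₁ : w₁ ∈ cfg.c i)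
    (h₂ : w₂ ∈ cfg.c i) (hr₁ : HasRank cfg r w₁) (hr₂ : HasRank cfg r w₂) : w₁ = w₂ := by
  let R x y := x = y ∨ ∀ s, HasRank cfg s x → ¬ HasRank cfg s y
  have hR : (cfg.c i).Pairwise R :=
    (hvalid.2 i).imp fun h => .inr fun s hx hy => (h s s hx hy).false
  have hR' : (cfg.c i).Pairwise (flip R) :=
    (hvalid.2 i).imp fun h => .inr fun s hy hx => (h s s hx hy).false
  exact ((hR.forall_of_forall_of_flip (fun _ _ => .inl rfl) hR') h₁ h₂).resolve_right
    fun h => h r hr₁ hr₂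

end Rank

section Extension

variable {cfg cfg' : Config G k v m} {i j : Fin k} {r s : ℕ} {b w : V}

/-- The cascade vertices of part `j` that are kept when `b` joins the cascade of part `i` with
rank `r`. -/
def Survives (cfg : Config G k v m) (i : Fin k) (r : ℕ) (j : Fin k) (w : V) : Prop :=
  ∃ s ≤ r, HasRank cfg s w ∧ (s < r ∨ j ≠ i)

theorem survives_iff_of_hasRank (hw : HasRank cfg s w) (hs : s ≤ r) :
    Survives cfg i r j w ↔ s < r ∨ j ≠ i := by
  constructor
  · rintro ⟨s', -, hs', h⟩
    rwa [hs'.unique hw] at h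
  · exact fun h => ⟨s, hs, hw, h⟩

theorem Valid.pairwise_survives (hvalid : Valid cfg) (i : Fin k) (r : ℕ) (j : Fin k) :
    (cfg.c j).Pairwise fun x y => Survives cfg i r j y → Survives cfg i r j x := by
  refine (hvalid.2 j).imp_of_mem fun hx _ hxy => ?_
  rintro ⟨sy, hsy, hy, -⟩
  obtain ⟨sx, hx'⟩ := hvalid.1 _ ⟨j, hx⟩
  have := hxy sx sy hx' hy
  exact ⟨sx, by omega, hx', .inl (by omega)⟩

structure IsExtension (cfg cfg' : Config G k v m) (i : Fin k) (r : ℕ) (b : V) : Prop where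
  A_eq : cfg'.A = cfg.A
  mem_c : ∀ j w, w ∈ cfg'.c j ↔ (w ∈ cfg.c j ∧ Survives cfg i r j w) ∨ (j = i ∧ w = b)
  sublist_c : ∀ j, (cfg'.c j).Sublist (cfg.c j ++ if j = i then [b] else [])

theorem exists_isExtension (hvalid : Valid cfg) (hi : i ≠ 0) (hbA : b ∈ cfg.A i)
    (hbv : b ≠ v i) (hbi : b ∉ cfg.c i) (hbres : ¬ InReservoir cfg b) (r : ℕ) :
    ∃ cfg' : Config G k v m, IsExtension cfg cfg' i r b := by
  classical
  let tail (j : Fin k) : List V := if j = i then [b] else []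
  let c (j : Fin k) : List V :=
    (cfg.c j).takeWhile (fun w => decide (Survives cfg i r j w)) ++ tail j
  have hprefix (j : Fin k) := List.takeWhile_prefix (l := cfg.c j)
    fun w => decide (Survives cfg i r j w)
  have mem_tail (j : Fin k) (w : V) : w ∈ tail j ↔ j = i ∧ w = b := by
    simp only [tail, List.mem_ite_nil_right, List.mem_singleton]
  have mem_c (j : Fin k) (w : V) :
      w ∈ c j ↔ (w ∈ cfg.c j ∧ Survives cfg i r j w) ∨ (j = i ∧ w = b) := by
    rw [List.mem_append, List.mem_takeWhile_iff_of_pairwise, decide_eq_true_iff, mem_tail]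
    simpa only [decide_eq_true_iff] using hvalid.pairwise_survives i r j
  have sublist_c (j : Fin k) : (c j).Sublist (cfg.c j ++ tail j) :=
    (hprefix j).sublist.append_right _
  refine ⟨⟨cfg.A, c, cfg.disj, cfg.conn, cfg.hcard, cfg.hmem, ?_, ?_, ?_, ?_⟩,
    rfl, mem_c, sublist_c⟩
  · simp [c, tail, cfg.c_zero, Ne.symm hi]
  · refine fun j => (sublist_c j).nodup (List.nodup_append.2 ⟨cfg.c_nodup j, ?_, ?_⟩)
    · by_cases hj : j = i <;> simp [tail, hj]
    · rintro x hx y hy rfl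
      obtain ⟨rfl, rfl⟩ := (mem_tail j x).1 hy
      exact hbi hx
  · intro j w hw
    rcases (mem_c j w).1 hw with ⟨hw, -⟩ | ⟨rfl, rfl⟩
    exacts [cfg.c_mem j w hw, ⟨hbA, hbv⟩]
  · intro j
    by_cases hj : j = i
    · subst hj
      simp only [c, tail, ↓reduceIte]
      refine (List.IsChain.prefix (cfg.c_chain j) (hprefix j)).append (List.isChain_singleton b) ?_
      intro x hx y hy
      rw [List.head?_cons, Option.mem_some_iff] at hy
      subst hy
      exact fun h => hbres ⟨j, x, (hprefix j).subset (List.mem_of_mem_getLast? hx), h⟩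
    · simp only [c, tail, hj, ↓reduceIte, List.append_nil]
      exact List.IsChain.prefix (cfg.c_chain j) (hprefix j)

theorem IsExtension.mem_hasRank_iff (he : IsExtension cfg cfg' i r b)
    (hbc : ¬ IsCascadeVertex cfg b) (hb : PartRank cfg i r b) (hs : s ≤ r) (j : Fin k) (w : V) :
    w ∈ cfg'.c j ∧ HasRank cfg' s w ↔
      (w ∈ cfg.c j ∧ HasRank cfg s w ∧ (s < r ∨ j ≠ i)) ∨ (j = i ∧ w = b ∧ s = r) := by
  induction s using Nat.strong_induction_on generalizing j w with
  | _ s ih =>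
  have hcongr : PartRank cfg' j s w ↔ PartRank cfg j s w :=
    partRank_congr he.A_eq fun t ht j' w' => by
      rw [ih t ht (by omega)]
      simp [show t < r by omega, show t ≠ r by omega]
  rw [and_congr_right fun hw : w ∈ cfg'.c j => hasRank_iff_partRank (r := s) hw, hcongr, he.mem_c]
  by_cases hwb : w = b
  · subst hwb
    have hbj : w ∉ cfg.c j := fun h => hbc ⟨j, h⟩
    simp only [hbj, false_and, false_or, true_and, and_true]
    refine and_congr_right fun hj => ?_
    subst hj
    exact ⟨fun h => h.unique hb, fun h => h ▸ hb⟩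
  · simp only [hwb, and_false, false_and, or_false]
    constructor
    · rintro ⟨⟨hw, hsurv⟩, hrank⟩
      have hrank := (hasRank_iff_partRank hw).2 hrank
      exact ⟨hw, hrank, (survives_iff_of_hasRank hrank hs).1 hsurv⟩
    · rintro ⟨hw, hrank, h⟩
      exact ⟨⟨hw, (survives_iff_of_hasRank hrank hs).2 h⟩, (hasRank_iff_partRank hw).1 hrank⟩

theorem IsExtension.mem_hasRank_iff_of_lt (he : IsExtension cfg cfg' i r b)
    (hbc : ¬ IsCascadeVertex cfg b) (hb : PartRank cfg i r b) (hs : s < r) (j : Fin k) (w : V) :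
    w ∈ cfg'.c j ∧ HasRank cfg' s w ↔ w ∈ cfg.c j ∧ HasRank cfg s w := by
  rw [he.mem_hasRank_iff hbc hb hs.le]
  simp [hs, hs.ne]

theorem IsExtension.hasRank_appended (he : IsExtension cfg cfg' i r b)
    (hbc : ¬ IsCascadeVertex cfg b) (hb : PartRank cfg i r b) : b ∈ cfg'.c i ∧ HasRank cfg' r b :=
  (he.mem_hasRank_iff hbc hb le_rfl i b).2 (.inr ⟨rfl, rfl, rfl⟩)

theorem IsExtension.exists_hasRank (he : IsExtension cfg cfg' i r b)
    (hbc : ¬ IsCascadeVertex cfg b) (hb : PartRank cfg i r b) (hw : w ∈ cfg'.c j) (hwb : w ≠ b) :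
    ∃ s, HasRank cfg s w ∧ HasRank cfg' s w ∧ (s < r ∨ j ≠ i) := by
  obtain ⟨hw', s, hs, hrank, h⟩ := ((he.mem_c j w).1 hw).resolve_right fun h => hwb h.2
  exact ⟨s, hrank, ((he.mem_hasRank_iff hbc hb hs j w).2 (.inl ⟨hw', hrank, h⟩)).2, h⟩

theorem IsExtension.valid (he : IsExtension cfg cfg' i r b) (hvalid : Valid cfg)
    (hbc : ¬ IsCascadeVertex cfg b) (hb : PartRank cfg i r b) : Valid cfg' := by
  refine ⟨fun w ⟨j, hw⟩ => ?_, fun j => ?_⟩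
  · by_cases hwb : w = b
    · exact ⟨r, hwb ▸ (he.hasRank_appended hbc hb).2⟩
    · obtain ⟨s, -, hs, -⟩ := he.exists_hasRank hbc hb hw hwb
      exact ⟨s, hs⟩
  -- `x ≠ b` excludes the pair `(b, b)`, which `imp_of_mem` would otherwise have to handle
  let R x y := x ≠ b ∧ ∀ ra rb, HasRank cfg ra x → HasRank cfg rb y → ra < rb
  have hR : (cfg.c j ++ if j = i then [b] else []).Pairwise R := by
    refine List.pairwise_append.2 ⟨(hvalid.2 j).imp_of_mem fun hx _ h =>
      ⟨fun e => hbc ⟨j, e ▸ hx⟩, h⟩, by split_ifs <;> simp, fun x hx y hy =>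
      ⟨fun e => hbc ⟨j, e ▸ hx⟩, fun _ _ _ hry => (hbc ?_).elim⟩⟩
    rw [List.mem_ite_nil_right, List.mem_singleton] at hy
    exact hy.2 ▸ hry.exists_mem
  refine (hR.sublist (he.sublist_c j)).imp_of_mem fun {x y} hx hy ⟨hxb, h⟩ ra rb hra hrb => ?_
  obtain ⟨sx, hsx, hsx', hx_lt⟩ := he.exists_hasRank hbc hb hx hxb
  rw [hra.unique hsx']
  by_cases hyb : y = b
  · obtain ⟨hji, -⟩ := ((he.mem_c j y).1 hy).resolve_left fun h => hbc ⟨j, hyb ▸ h.1⟩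
    rw [hrb.unique (hyb ▸ (he.hasRank_appended hbc hb).2)]
    exact hx_lt.resolve_right (not_not.2 hji)
  · obtain ⟨sy, hsy, hsy', -⟩ := he.exists_hasRank hbc hb hy hyb
    rw [hrb.unique hsy']
    exact h sx sy hsx hsy

theorem IsExtension.rho_eq (he : IsExtension cfg cfg' i r b) (hbc : ¬ IsCascadeVertex cfg b)
    (hb : PartRank cfg i r b) (hs : s < r) : rho cfg' s = rho cfg s := by
  simp only [rho, he.A_eq, ← and_assoc, he.mem_hasRank_iff_of_lt hbc hb hs]

theorem IsExtension.rho_lt (he : IsExtension cfg cfg' i r b) (hvalid : Valid cfg)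
    (hbc : ¬ IsCascadeVertex cfg b) (hb : PartRank cfg i r b) (hbA : b ∈ cfg.A i)
    (hbv : b ≠ v i) (hbres : ¬ InReservoir cfg b) : rho cfg r < rho cfg' r := by
  obtain ⟨hb', hbr⟩ := he.hasRank_appended hbc hb
  refine Set.ncard_lt_ncard ((Set.ssubset_iff_of_subset ?_).2 ?_)
  · rintro u ⟨j, w, hw, hwr, hu⟩
    by_cases hj : j = i
    · subst hj
      refine ⟨j, b, hb', hbr, he.A_eq ▸ ?_⟩
      exact reservoir_subset_reservoir hbA (fun h => hbres ⟨j, w, hw, h⟩) hu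
    · obtain ⟨hw', hwr'⟩ := (he.mem_hasRank_iff hbc hb le_rfl j w).2 (.inl ⟨hw, hwr, .inr hj⟩)
      exact ⟨j, w, hw', hwr', he.A_eq ▸ hu⟩
  -- the new element: the rank-`r` vertex of part `i` if there is one, and `v i` otherwise
  obtain ⟨x, hxA, hxb, hx⟩ : ∃ x ∈ cfg.A i, x ∈ reservoir G (cfg.A i) (v i) b ∧
      ∀ w ∈ cfg.c i, HasRank cfg r w → x ∉ reservoir G (cfg.A i) (v i) w := by
    by_cases hex : ∃ w ∈ cfg.c i, HasRank cfg r w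
    · obtain ⟨w₀, hw₀, hw₀r⟩ := hex
      have hw₀A := (cfg.c_mem i w₀ hw₀).1
      refine ⟨w₀, hw₀A, mem_reservoir_of_notMem_reservoir (cfg.conn i) (cfg.hmem i) hw₀A hbA
        (fun h => hbc ⟨i, h ▸ hw₀⟩) fun h => hbres ⟨i, w₀, hw₀, h⟩, fun w hw hwr => ?_⟩
      rw [hvalid.eq_of_hasRank hw hw₀ hwr hw₀r]
      exact notMem_reservoir_self
    · exact ⟨v i, cfg.hmem i, root_mem_reservoir (cfg.hmem i) hbv.symm,
        fun w hw hwr => (hex ⟨w, hw, hwr⟩).elim⟩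
  refine ⟨x, ⟨i, b, hb', hbr, he.A_eq ▸ hxb⟩, ?_⟩
  rintro ⟨j, w, hw, hwr, hxw⟩
  obtain rfl := cfg.eq_of_mem_A (mem_of_mem_reservoir hxw).1 hxA
  exact hx w hw hwr hxw

end Extension

theorem ROptimal.of_rho_eq {cfg cfg' : Config G k v m} {n : ℕ} (hopt : ROptimal cfg n)
    (hvalid : Valid cfg') (hrho : ∀ s ≤ n, rho cfg' s = rho cfg s) : ROptimal cfg' n := by
  induction n with
  | zero => exact hvalid
  | succ n ih =>
    refine ⟨ih hopt.1 fun s hs => hrho s (by omega), fun c hc => ?_⟩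
    rw [hrho (n + 1) le_rfl]
    exact hopt.2 c hc

theorem Optimal.mem_cascade_of_adj {cfg : Config G k v m} (hopt : Optimal cfg) {i : Fin k}
    (hi : i ≠ 0) {a b : V} (hab : G.Adj a b) (ha : a ∈ cfg.A 0 ∨ InReservoir cfg a)
    (hbA : b ∈ cfg.A i) (hbv : b ≠ v i) (hbres : ¬ InReservoir cfg b) : b ∈ cfg.c i := by
  by_contra hbi
  have hvalid : Valid cfg := hopt 0
  have hbc : ¬ IsCascadeVertex cfg b := fun ⟨j, hj⟩ =>
    hbi (cfg.eq_of_mem_A (cfg.c_mem j b hj).1 hbA ▸ hj)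
  obtain ⟨r, hb⟩ := exists_partRank_of_adj hvalid hab ha hbA hbi hbres
  obtain ⟨n, rfl⟩ := Nat.exists_eq_succ_of_ne_zero hb.ne_zero
  obtain ⟨cfg', he⟩ := exists_isExtension hvalid hi hbA hbv hbi hbres (n + 1)
  have hopt' : ROptimal cfg' n := (hopt n).of_rho_eq (he.valid hvalid hbc hb)
    fun s hs => he.rho_eq hbc hb (Nat.lt_succ_of_le hs)
  exact (he.rho_lt hvalid hbc hb hbA hbv hbres).not_ge ((hopt (n + 1)).2 cfg' hopt')

theorem edge_to_cascade_end_general {V : Type} [Fintype V]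
    (G : SimpleGraph V) (k : ℕ) [NeZero k]
    (v : Fin k → V)
    (m : Fin k → ℕ)
    (cfg : Config G k v m) (hopt : Optimal cfg)
    (a b : V) (hab : G.Adj a b)
    (ha : a ∈ cfg.A 0 ∨ InReservoir cfg a)
    (i : Fin k) (hi : i ≠ 0)
    (hbA : b ∈ cfg.A i) (hbv : b ≠ v i)
    (hbres : ¬ InReservoir cfg b) :
    ∃ h : cfg.c i ≠ [], (cfg.c i).getLast h = b := by
  have hbi := hopt.mem_cascade_of_adj hi hab ha hbA hbv hbres
  refine ⟨List.ne_nil_of_mem hbi,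
    List.getLast_eq_of_forall_not_rel (cfg.c_chain i) (cfg.c_nodup i) hbi fun y hy hyb hby => ?_⟩
  exact hbres ⟨i, y, hy, mem_reservoir_of_notMem_reservoir (cfg.conn i) (cfg.hmem i) hbA
    (cfg.c_mem i y hy).1 hyb.symm hby⟩

/-- **Lemma 2 of Hoyer–Thomas.**  In the setting of Theorem 2, suppose an
optimal configuration contains an edge `ab` of `G` such that (1) `a` is in
part `0` or in a reservoir, and (2) `b` is in part `i` for some `i ≠ 0`,
`b ≠ v i`, and `b` is not in any reservoir.  Then the cascade of part `i` is
not null and `b` is its last vertex. -/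
theorem edge_to_cascade_end {V : Type} [Fintype V]
    (G : SimpleGraph V) (k : ℕ) [NeZero k] (hk : 2 ≤ k)
    (hconn : KConnected G k)
    (v : Fin k → V) (hv : Function.Injective v)
    (m : Fin k → ℕ) (hm : ∀ i, 0 < m i)
    (hsum : ∑ i, m i < Fintype.card V)
    (cfg : Config G k v m) (hopt : Optimal cfg)
    (a b : V) (hab : G.Adj a b)
    (ha : a ∈ cfg.A 0 ∨ InReservoir cfg a)
    (i : Fin k) (hi : i ≠ 0)
    (hbA : b ∈ cfg.A i) (hbv : b ≠ v i)
    (hbres : ¬ InReservoir cfg b) :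
    ∃ h : cfg.c i ≠ [], (cfg.c i).getLast h = b :=
  edge_to_cascade_end_general G k v m cfg hopt a b hab ha i hi hbA hbv hbres
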